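/- (Corollary (ii), containment) The matrices A and T belong to Γ̃(5,5); consequently the subgroup Γ of GL(4,ℤ) generated by A and T is contained in Γ̃(5,5). -/

import Mathlib

open Matrix

/-- The local monodromy of the quintic-mirror family around `λ = 0`. -/
def A : Matrix (Fin 4) (Fin 4) ℤ :=
  !![11, 8, -5, 0; 5, -4, -3, 1; 20, 15, -9, 0; 5, -5, -3, 1]

/-- The local monodromy of the quintic-mirror family around `λ = 1`. -/
def T : Matrix (Fin 4) (Fin 4) ℤ :=
  !![1, 0, 0, 0; 0, 1, 0, -1; 0, 0, 1, 0; 0, 0, 0, 1]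

/-- `A` as an element of `GL(4, ℤ)`. -/
def AGL : GL (Fin 4) ℤ :=
  ⟨A, !![-9, -3, 5, 3; 0, 1, 0, -1; -20, -5, 11, 5; -15, 5, 8, -4],
    by decide, by decide⟩

/-- `T` as an element of `GL(4, ℤ)`. -/
def TGL : GL (Fin 4) ℤ :=
  ⟨T, !![1, 0, 0, 0; 0, 1, 0, 1; 0, 0, 1, 0; 0, 0, 0, 1],
    by decide, by decide⟩

/-- The standard symplectic form matrix. -/
def Jsym : Matrix (Fin 4) (Fin 4) ℤ :=
  !![0, 0, 1, 0; 0, 0, 0, 1; -1, 0, 0, 0; 0, -1, 0, 0]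

/-- `Sp(4, ℤ)`: the set of symplectic `4 × 4` integer matrices. -/
def Sp4Z : Set (Matrix (Fin 4) (Fin 4) ℤ) := {X | Xᵀ * Jsym * X = Jsym}

/-- The congruence subgroup `Γ(5,5)` of Chen–Yang–Yui. -/
def Gamma55 : Set (Matrix (Fin 4) (Fin 4) ℤ) :=
  {X | X ∈ Sp4Z ∧
    X 0 0 ≡ 1 [ZMOD 5] ∧ X 1 1 ≡ 1 [ZMOD 5] ∧ X 2 2 ≡ 1 [ZMOD 5] ∧ X 3 3 ≡ 1 [ZMOD 5] ∧
    X 1 0 ≡ 0 [ZMOD 5] ∧ X 2 0 ≡ 0 [ZMOD 5] ∧ X 2 1 ≡ 0 [ZMOD 5] ∧ X 2 3 ≡ 0 [ZMOD 5] ∧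
    X 3 0 ≡ 0 [ZMOD 5] ∧ X 3 1 ≡ 0 [ZMOD 5]}

/-- The smaller congruence subgroup `Γ̃(5,5)`. -/
def GammaTilde55 : Set (Matrix (Fin 4) (Fin 4) ℤ) :=
  {X | X ∈ Gamma55 ∧
    X 2 0 ≡ 15 * X 0 1 [ZMOD 25] ∧
    X 2 1 ≡ 20 * (X 0 1) ^ 2 + 20 * X 0 1 [ZMOD 25]}

/-!
Reduced modulo 5, the congruences defining Γ(5,5) say that `X` is unitriangular for the basis
order e₁, e₂, e₄, e₃, so Γ(5,5) is closed under products. For `X, Y ∈ Γ(5,5)` one finds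
(XY)₁₂ ≡ X₁₂ + Y₁₂ (mod 5) and, modulo 25, (XY)₃₁ ≡ X₃₁ + Y₃₁ and
(XY)₃₂ ≡ X₃₂ + Y₃₂ + X₃₁Y₁₂. The map u ↦ (15u, 20u² + 20u), from ℤ/5 to (5ℤ/25ℤ)², obeys the
same composition rule, because 40 ≡ 15 (mod 25); hence Γ̃(5,5) is closed under products as well.
It contains A, T and their inverses, so it contains the group they generate.
-/

namespace Matrix

variable {m α R : Type*} [Fintype m] [LinearOrder α]

def IsUnitriangular [Zero R] [One R] (b : m → α) (M : Matrix m m R) : Prop :=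
  M.BlockTriangular b ∧ ∀ i, M i i = 1

theorem BlockTriangular.mul_apply_self [NonUnitalNonAssocSemiring R] {b : m → α}
    (hb : Function.Injective b) {M N : Matrix m m R} (hM : M.BlockTriangular b)
    (hN : N.BlockTriangular b) (i : m) : (M * N) i i = M i i * N i i := by
  refine Finset.sum_eq_single i (fun k _ hki => ?_) (by simp)
  rcases lt_or_gt_of_ne (hb.ne hki) with hlt | hgt
  · exact mul_eq_zero_of_left (hM hlt) _
  · exact mul_eq_zero_of_right _ (hN hgt)

theorem IsUnitriangular.mul [NonAssocSemiring R] {b : m → α} (hb : Function.Injective b)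
    {M N : Matrix m m R} (hM : M.IsUnitriangular b) (hN : N.IsUnitriangular b) :
    (M * N).IsUnitriangular b :=
  ⟨hM.1.mul hN.1, fun i => by rw [hM.1.mul_apply_self hb hN.1, hM.2, hN.2, one_mul]⟩

theorem transpose_mul_mul_self_eq_mul [CommSemiring R] {J X Y : Matrix m m R}
    (hX : Xᵀ * J * X = J) (hY : Yᵀ * J * Y = J) : (X * Y)ᵀ * J * (X * Y) = J :=
  calc (X * Y)ᵀ * J * (X * Y) = Yᵀ * (Xᵀ * J * X) * Y := by
        simp only [transpose_mul, Matrix.mul_assoc]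
    _ = J := by rw [hX, hY]

end Matrix

theorem mem_gamma55_iff {X : Matrix (Fin 4) (Fin 4) ℤ} :
    X ∈ Gamma55 ↔ X ∈ Sp4Z ∧ (X.map (Int.castRingHom (ZMod 5))).IsUnitriangular ![0, 1, 3, 2] := by
  have hmod (a b : ℤ) : a ≡ b [ZMOD 5] ↔ (a : ZMod 5) = b := (ZMod.intCast_eq_intCast_iff a b 5).symm
  simp +decide only [Gamma55, Set.mem_ofPred_eq, IsUnitriangular, BlockTriangular,
    Fin.forall_fin_succ, map_apply, Int.coe_castRingHom, hmod, Int.cast_zero, Int.cast_one,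
    IsEmpty.forall_iff, forall_const, and_true, true_and]
  tauto

theorem Gamma55.mul_mem {X Y : Matrix (Fin 4) (Fin 4) ℤ} (hX : X ∈ Gamma55) (hY : Y ∈ Gamma55) :
    X * Y ∈ Gamma55 := by
  rw [mem_gamma55_iff] at hX hY ⊢
  refine ⟨transpose_mul_mul_self_eq_mul hX.1 hY.1, ?_⟩
  rw [Matrix.map_mul]
  exact hX.2.mul (by decide) hY.2

namespace Int

variable {n a b : ℤ}

theorem mul_modEq_zero_of_modEq_zero (ha : a ≡ 0 [ZMOD n]) (hb : b ≡ 0 [ZMOD n]) :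
    a * b ≡ 0 [ZMOD n * n] :=
  modEq_zero_iff_dvd.2 (mul_dvd_mul (modEq_zero_iff_dvd.1 ha) (modEq_zero_iff_dvd.1 hb))

theorem mul_modEq_of_modEq_one_of_modEq_zero (ha : a ≡ 1 [ZMOD n]) (hb : b ≡ 0 [ZMOD n]) :
    a * b ≡ b [ZMOD n * n] := by
  have h := mul_dvd_mul ha.dvd (modEq_zero_iff_dvd.1 hb)
  rw [sub_mul, one_mul] at h
  exact modEq_iff_dvd.2 h

end Int

section Entries

variable {X Y : Matrix (Fin 4) (Fin 4) ℤ}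

theorem Gamma55.mul_apply_zero_one (hX : X ∈ Gamma55) (hY : Y ∈ Gamma55) :
    (X * Y) 0 1 ≡ X 0 1 + Y 0 1 [ZMOD 5] := by
  obtain ⟨-, hX00, -⟩ := hX
  obtain ⟨-, -, hY11, -, -, -, -, hY21, -, -, hY31⟩ := hY
  have := (((hX00.mul_right (Y 0 1)).add (hY11.mul_left (X 0 1))).add
    (hY21.mul_left (X 0 2))).add (hY31.mul_left (X 0 3))
  simp only [mul_apply, Fin.sum_univ_four]
  convert this using 1; ring

theorem Gamma55.mul_apply_two_zero (hX : X ∈ Gamma55) (hY : Y ∈ Gamma55) :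
    (X * Y) 2 0 ≡ X 2 0 + Y 2 0 [ZMOD 25] := by
  obtain ⟨-, -, -, hX22, -, -, hX20, hX21, hX23, -⟩ := hX
  obtain ⟨-, hY00, -, -, -, hY10, hY20, -, -, hY30, -⟩ := hY
  have := (((Int.mul_modEq_of_modEq_one_of_modEq_zero hY00 hX20).add
    (Int.mul_modEq_zero_of_modEq_zero hX21 hY10)).add
    (Int.mul_modEq_of_modEq_one_of_modEq_zero hX22 hY20)).add
    (Int.mul_modEq_zero_of_modEq_zero hX23 hY30)
  simp only [mul_apply, Fin.sum_univ_four]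
  convert this using 1 <;> ring

theorem Gamma55.mul_apply_two_one (hX : X ∈ Gamma55) (hY : Y ∈ Gamma55) :
    (X * Y) 2 1 ≡ X 2 1 + Y 2 1 + X 2 0 * Y 0 1 [ZMOD 25] := by
  obtain ⟨-, -, -, hX22, -, -, -, hX21, hX23, -⟩ := hX
  obtain ⟨-, -, hY11, -, -, -, -, hY21, -, -, hY31⟩ := hY
  have := (((Int.ModEq.refl (X 2 0 * Y 0 1)).add
    (Int.mul_modEq_of_modEq_one_of_modEq_zero hY11 hX21)).add
    (Int.mul_modEq_of_modEq_one_of_modEq_zero hX22 hY21)).add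
    (Int.mul_modEq_zero_of_modEq_zero hX23 hY31)
  simp only [mul_apply, Fin.sum_univ_four]
  convert this using 1 <;> ring

end Entries

section TildeConditions

variable {x y z : ℤ}

theorem fifteen_mul_modEq_add (h : z ≡ x + y [ZMOD 5]) :
    15 * z ≡ 15 * x + 15 * y [ZMOD 25] := by
  obtain ⟨t, ht⟩ := h.symm.dvd
  obtain rfl : z = x + y + 5 * t := by linarith
  exact Int.modEq_iff_dvd.2 ⟨-3 * t, by ring⟩

theorem twenty_mul_sq_add_modEq_add (h : z ≡ x + y [ZMOD 5]) :
    20 * z ^ 2 + 20 * z ≡ (20 * x ^ 2 + 20 * x) + (20 * y ^ 2 + 20 * y) + 15 * x * y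
      [ZMOD 25] := by
  obtain ⟨t, ht⟩ := h.symm.dvd
  obtain rfl : z = x + y + 5 * t := by linarith
  exact Int.modEq_iff_dvd.2 ⟨-(x * y + 8 * (x + y) * t + 20 * t ^ 2 + 4 * t), by ring⟩

end TildeConditions

theorem GammaTilde55.mul_mem {X Y : Matrix (Fin 4) (Fin 4) ℤ} (hX : X ∈ GammaTilde55)
    (hY : Y ∈ GammaTilde55) : X * Y ∈ GammaTilde55 := by
  obtain ⟨hX, hX20, hX21⟩ := hX
  obtain ⟨hY, hY20, hY21⟩ := hY
  have h01 := Gamma55.mul_apply_zero_one hX hY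
  refine ⟨Gamma55.mul_mem hX hY, ?_, ?_⟩
  · calc (X * Y) 2 0 ≡ X 2 0 + Y 2 0 [ZMOD 25] := Gamma55.mul_apply_two_zero hX hY
      _ ≡ 15 * X 0 1 + 15 * Y 0 1 [ZMOD 25] := hX20.add hY20
      _ ≡ 15 * (X * Y) 0 1 [ZMOD 25] := (fifteen_mul_modEq_add h01).symm
  · calc (X * Y) 2 1 ≡ X 2 1 + Y 2 1 + X 2 0 * Y 0 1 [ZMOD 25] :=
          Gamma55.mul_apply_two_one hX hY
      _ ≡ (20 * X 0 1 ^ 2 + 20 * X 0 1) + (20 * Y 0 1 ^ 2 + 20 * Y 0 1) + 15 * X 0 1 * Y 0 1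
          [ZMOD 25] := (hX21.add hY21).add (hX20.mul_right _)
      _ ≡ 20 * (X * Y) 0 1 ^ 2 + 20 * (X * Y) 0 1 [ZMOD 25] :=
          (twenty_mul_sq_add_modEq_add h01).symm

theorem one_mem_gammaTilde55 : (1 : Matrix (Fin 4) (Fin 4) ℤ) ∈ GammaTilde55 := by
  simp only [GammaTilde55, Gamma55, Sp4Z, Set.mem_ofPred_eq]; decide

theorem A_mem_gammaTilde55 : A ∈ GammaTilde55 := by
  simp only [GammaTilde55, Gamma55, Sp4Z, Set.mem_ofPred_eq]; decide

theorem T_mem_gammaTilde55 : T ∈ GammaTilde55 := by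
  simp only [GammaTilde55, Gamma55, Sp4Z, Set.mem_ofPred_eq]; decide

theorem AGL_inv_mem_gammaTilde55 :
    ((AGL⁻¹ : GL (Fin 4) ℤ) : Matrix (Fin 4) (Fin 4) ℤ) ∈ GammaTilde55 := by
  simp only [GammaTilde55, Gamma55, Sp4Z, Set.mem_ofPred_eq]; decide

theorem TGL_inv_mem_gammaTilde55 :
    ((TGL⁻¹ : GL (Fin 4) ℤ) : Matrix (Fin 4) (Fin 4) ℤ) ∈ GammaTilde55 := by
  simp only [GammaTilde55, Gamma55, Sp4Z, Set.mem_ofPred_eq]; decide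

/-- Corollary (ii), containment: `A, T ∈ Γ̃(5,5)`, hence `Γ ⊆ Γ̃(5,5)`. -/
theorem monodromy_subset_gammaTilde55 :
    A ∈ GammaTilde55 ∧ T ∈ GammaTilde55 ∧
    (∀ X : GL (Fin 4) ℤ, X ∈ Subgroup.closure {AGL, TGL} →
      (X : Matrix (Fin 4) (Fin 4) ℤ) ∈ GammaTilde55) := by
  refine ⟨A_mem_gammaTilde55, T_mem_gammaTilde55, fun X hX => ?_⟩
  induction hX using Subgroup.closure_induction'' with
  | mem x hx => rcases hx with rfl | rfl; exacts [A_mem_gammaTilde55, T_mem_gammaTilde55]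
  | inv_mem x hx =>
    rcases hx with rfl | rfl; exacts [AGL_inv_mem_gammaTilde55, TGL_inv_mem_gammaTilde55]
  | one => exact one_mem_gammaTilde55
  | mul x y _ _ hx hy => exact GammaTilde55.mul_mem hx hy
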